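/- Let A be a commutative noetherian ring and I = (a₁,…,aₙ) an ideal of A. Let Z₁ = {(x₁,…,xₙ) ∈ Aⁿ : Σᵢ xᵢaᵢ = 0} be the module of first syzygies of a₁,…,aₙ and B₁ ⊆ Z₁ the submodule of Koszul syzygies, generated by the elements aᵢe_j − a_je_i (1 ≤ i < j ≤ n, (e_i) the standard basis of Aⁿ). Then there is an isomorphism of A-modules (Z₁ ∩ I·Aⁿ)/B₁ ≅ ker( Sym²_A(I) → I² ), where Sym²_A(I) → I² is the canonical multiplication map. Consequently, B₁ = Z₁ ∩ I·Aⁿ if and only if I is syzygetic. -/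
import Mathlib


open TensorProduct

section Sym2

variable {A : Type*} [CommRing A] (I : Ideal A)

/-- The multiplication map `I ⊗_A I → A`, `x ⊗ y ↦ xy` (its image is `I²`). -/
noncomputable def tensorMul : (↥I ⊗[A] ↥I) →ₗ[A] A :=
  TensorProduct.lift (((LinearMap.mul A A).compl₂ I.subtype).comp I.subtype)

/-- The submodule of symmetry relations in `I ⊗_A I`, so that
`Sym²_A(I) = (I ⊗_A I)/symRel I`. -/
noncomputable def symRel : Submodule A (↥I ⊗[A] ↥I) :=
  Submodule.span A {t | ∃ x y : I, t = x ⊗ₜ y - y ⊗ₜ x}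

/-- The canonical multiplication (downgrading) map `Sym²_A(I) → I² ⊆ A`,
`cls(x ⊗ y) ↦ xy`.  Its kernel is `δ(I) = ker(Sym²_A(I) → I²)`, and `I` is syzygetic
iff this kernel vanishes. -/
noncomputable def sym2Mul : ((↥I ⊗[A] ↥I) ⧸ symRel I) →ₗ[A] A :=
  Submodule.liftQ (symRel I) (tensorMul I) (by
    rw [symRel, Submodule.span_le]
    rintro t ⟨x, y, rfl⟩
    simp only [SetLike.mem_coe, LinearMap.mem_ker, map_sub, tensorMul,
      TensorProduct.lift.tmul]
    simp [LinearMap.mul_apply', mul_comm])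

end Sym2

section Aux13

variable {A : Type*} [CommRing A] {n : ℕ} (a : Fin n → A) (I : Ideal A)

/-- Coercion `I^n → A^n`, as a linear map. -/
noncomputable def cV13 : (Fin n → ↥I) →ₗ[A] (Fin n → A) :=
  LinearMap.pi fun i => I.subtype.comp (LinearMap.proj i)

lemma cV13_apply (v : Fin n → ↥I) (k : Fin n) : cV13 I v k = (v k : A) := rfl

lemma cV13_injective : Function.Injective (cV13 (n := n) I) := fun v w h =>
  funext fun k => Subtype.ext (congrFun h k)

/-- `G : I^n → I ⊗ I`, `v ↦ ∑ aᵢ ⊗ vᵢ`. -/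
noncomputable def auxG13 (ha : ∀ i, a i ∈ I) : (Fin n → ↥I) →ₗ[A] (↥I ⊗[A] ↥I) :=
  ∑ i, (TensorProduct.mk A ↥I ↥I ⟨a i, ha i⟩).comp (LinearMap.proj i)

lemma auxG13_apply (ha : ∀ i, a i ∈ I) (v : Fin n → ↥I) :
    auxG13 a I ha v = ∑ i, (⟨a i, ha i⟩ : ↥I) ⊗ₜ[A] v i := by
  simp [auxG13]

lemma auxG13_single (ha : ∀ i, a i ∈ I) (k : Fin n) (x : ↥I) :
    auxG13 a I ha (Pi.single k x) = (⟨a k, ha k⟩ : ↥I) ⊗ₜ[A] x := by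
  rw [auxG13_apply, Finset.sum_eq_single k]
  · rw [Pi.single_eq_same]
  · intro i _ hik
    rw [Pi.single_eq_of_ne hik, TensorProduct.tmul_zero]
  · intro h; exact absurd (Finset.mem_univ k) h

/-- `F : A^n → I`, `v ↦ ∑ vᵢ aᵢ`. -/
noncomputable def auxF13 (ha : ∀ i, a i ∈ I) : (Fin n → A) →ₗ[A] ↥I :=
  LinearMap.codRestrict I (∑ i, (LinearMap.proj i).smulRight (a i)) fun v => by
    simp only [LinearMap.sum_apply, LinearMap.smulRight_apply, LinearMap.proj_apply]
    exact Submodule.sum_mem _ fun i _ => Submodule.smul_mem _ _ (ha i)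

lemma auxF13_apply (ha : ∀ i, a i ∈ I) (v : Fin n → A) :
    (auxF13 a I ha v : A) = ∑ i, v i * a i := by
  simp [auxF13, LinearMap.codRestrict, smul_eq_mul]

noncomputable def auxE13 : (Fin n → ↥I) →ₗ[A] ((Fin n → A) ⊗[A] ↥I) :=
  ∑ i, (TensorProduct.mk A (Fin n → A) ↥I (Pi.single i 1)).comp (LinearMap.proj i)

noncomputable def auxH13 : ((Fin n → A) ⊗[A] ↥I) →ₗ[A] (Fin n → A) :=
  TensorProduct.lift (((LinearMap.lsmul A (Fin n → A)).comp I.subtype).flip)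

lemma auxH13_tmul (v : Fin n → A) (y : ↥I) : auxH13 I (v ⊗ₜ[A] y) = (y : A) • v := rfl

lemma tensorMul_auxG13 (ha : ∀ i, a i ∈ I) (v : Fin n → ↥I) :
    tensorMul I (auxG13 a I ha v) = ∑ i, a i * (v i : A) := by
  rw [auxG13_apply, map_sum]
  refine Finset.sum_congr rfl fun i _ => ?_
  simp [tensorMul]

lemma memZ13 (Z₁ : Submodule A (Fin n → A))
    (hZ₁ : Z₁ = LinearMap.ker (∑ i, (LinearMap.proj i).smulRight (a i) :
      (Fin n → A) →ₗ[A] A)) (v : Fin n → A) :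
    v ∈ Z₁ ↔ ∑ i, v i * a i = 0 := by
  subst hZ₁
  simp [LinearMap.mem_ker, smul_eq_mul]

lemma koszulGen13 (B₁ : Submodule A (Fin n → A))
    (hB₁ : B₁ = Submodule.span A
      {v | ∃ i j : Fin n, i < j ∧ v = Pi.single j (a i) - Pi.single i (a j)})
    (i j : Fin n) : Pi.single i (a j) - Pi.single j (a i) ∈ B₁ := by
  rcases lt_trichotomy i j with h | h | h
  · have hm : Pi.single j (a i) - Pi.single i (a j) ∈ B₁ :=
      hB₁ ▸ Submodule.subset_span ⟨i, j, h, rfl⟩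
    simpa [neg_sub] using neg_mem hm
  · subst h; simp
  · exact hB₁ ▸ Submodule.subset_span ⟨j, i, h, rfl⟩

lemma smul_syz_mem13 (hI : I = Ideal.span (Set.range a))
    (Z₁ : Submodule A (Fin n → A))
    (hZ₁ : Z₁ = LinearMap.ker (∑ i, (LinearMap.proj i).smulRight (a i) :
      (Fin n → A) →ₗ[A] A))
    (B₁ : Submodule A (Fin n → A))
    (hB₁ : B₁ = Submodule.span A
      {v | ∃ i j : Fin n, i < j ∧ v = Pi.single j (a i) - Pi.single i (a j)})
    {z : Fin n → A} (hz : z ∈ Z₁) {y : A} (hy : y ∈ I) : y • z ∈ B₁ := by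
  have hy' : y ∈ Submodule.span A (Set.range a) := by rwa [hI] at hy
  clear hy
  induction hy' using Submodule.span_induction with
  | mem x hx =>
    obtain ⟨j, rfl⟩ := hx
    have hz' : ∑ i, z i * a i = 0 := (memZ13 a Z₁ hZ₁ z).1 hz
    have key : a j • z = ∑ i, z i • (Pi.single i (a j) - Pi.single j (a i)) := by
      funext k
      simp only [Finset.sum_apply, Pi.smul_apply, Pi.sub_apply, Pi.single_apply,
        smul_eq_mul, mul_sub, Finset.sum_sub_distrib]
      simp only [mul_ite, mul_zero]
      rw [Finset.sum_ite_eq Finset.univ k (fun x => z x * a j)]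
      by_cases hkj : k = j
      · subst hkj
        have hz'' : ∑ x, a x * z x = 0 := by
          rw [← hz']; exact Finset.sum_congr rfl fun x _ => mul_comm _ _
        simp [hz'', mul_comm]
      · simp [hkj, mul_comm]
    rw [key]
    exact Submodule.sum_mem _ fun i _ =>
      Submodule.smul_mem _ _ (koszulGen13 a B₁ hB₁ i j)
  | zero => simpa using B₁.zero_mem
  | add x y _ _ ihx ihy => rw [add_smul]; exact add_mem ihx ihy
  | smul c x _ ih => rw [smul_assoc]; exact Submodule.smul_mem _ _ ih

lemma B1_le13 (ha : ∀ i, a i ∈ I)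
    (Z₁ : Submodule A (Fin n → A))
    (hZ₁ : Z₁ = LinearMap.ker (∑ i, (LinearMap.proj i).smulRight (a i) :
      (Fin n → A) →ₗ[A] A))
    (B₁ : Submodule A (Fin n → A))
    (hB₁ : B₁ = Submodule.span A
      {v | ∃ i j : Fin n, i < j ∧ v = Pi.single j (a i) - Pi.single i (a j)})
    (IAn : Submodule A (Fin n → A))
    (hIAn : IAn = Submodule.pi Set.univ fun _ => (I : Submodule A A)) :
    B₁ ≤ Z₁ ⊓ IAn := by
  rw [hB₁, Submodule.span_le]
  rintro v ⟨i, j, hij, rfl⟩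
  refine ⟨(memZ13 a Z₁ hZ₁ _).2 ?_, ?_⟩
  · simp only [Pi.sub_apply, Pi.single_apply, sub_mul, Finset.sum_sub_distrib,
      ite_mul, zero_mul, Finset.sum_ite_eq]
    simp [mul_comm]
  · rw [hIAn]
    intro k _
    have hsingle : ∀ (l m : Fin n), (Pi.single l (a m) : Fin n → A) k ∈ I := by
      intro l m
      rw [Pi.single_apply]
      split
      · exact ha m
      · exact zero_mem I
    exact sub_mem (hsingle j i) (hsingle i j)

lemma mem_spanRange13 (hI : I = Ideal.span (Set.range a)) (x : ↥I) :
    (x : A) ∈ Submodule.span A (Set.range a) := by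
  rw [Ideal.submodule_span_eq, ← hI]; exact x.2

lemma auxG13_surj (ha : ∀ i, a i ∈ I) (hI : I = Ideal.span (Set.range a)) :
    Function.Surjective (auxG13 a I ha) := by
  rw [← LinearMap.range_eq_top, eq_top_iff, ← TensorProduct.span_tmul_eq_top,
    Submodule.span_le]
  rintro _ ⟨x, y, rfl⟩
  obtain ⟨c, hc⟩ := (Submodule.mem_span_range_iff_exists_fun A).1 (mem_spanRange13 a I hI x)
  refine ⟨fun i => c i • y, ?_⟩
  rw [auxG13_apply]
  simp_rw [TensorProduct.tmul_smul, TensorProduct.smul_tmul', ← TensorProduct.sum_tmul]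
  congr 1
  exact Subtype.ext (by push_cast; exact hc)

lemma symRel_le13 (ha : ∀ i, a i ∈ I) (hI : I = Ideal.span (Set.range a))
    (B₁ : Submodule A (Fin n → A))
    (hB₁ : B₁ = Submodule.span A
      {v | ∃ i j : Fin n, i < j ∧ v = Pi.single j (a i) - Pi.single i (a j)}) :
    symRel I ≤ Submodule.map (auxG13 a I ha) (Submodule.comap (cV13 I) B₁) := by
  rw [symRel, Submodule.span_le]
  rintro t ⟨x, y, rfl⟩
  obtain ⟨c, hc⟩ := (Submodule.mem_span_range_iff_exists_fun A).1 (mem_spanRange13 a I hI x)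
  obtain ⟨d, hd⟩ := (Submodule.mem_span_range_iff_exists_fun A).1 (mem_spanRange13 a I hI y)
  refine ⟨fun k => c k • y - d k • x, ?_, ?_⟩
  · -- cV13 of w ∈ B₁
    have key : cV13 I (fun k => c k • y - d k • x)
        = ∑ i, ∑ j, (c i * d j) • (Pi.single i (a j) - Pi.single j (a i)) := by
      funext k
      simp only [cV13_apply, Finset.sum_apply, Pi.smul_apply, Pi.sub_apply,
        Pi.single_apply, smul_eq_mul, mul_sub, Finset.sum_sub_distrib, mul_ite, mul_zero,
        AddSubgroupClass.coe_sub, SetLike.val_smul]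
      have hy1 : ∑ j, d j * a j = (y : A) := by simpa [smul_eq_mul] using hd
      have hx1 : ∑ j, c j * a j = (x : A) := by simpa [smul_eq_mul] using hc
      have hS1 : (∑ i, ∑ j, if k = i then c i * d j * a j else 0) = c k * (y : A) := by
        have h1 : ∀ i, (∑ j, if k = i then c i * d j * a j else 0)
            = if k = i then c i * (y : A) else 0 := by
          intro i
          split
          · rw [← hy1, Finset.mul_sum]
            exact Finset.sum_congr rfl fun j _ => mul_assoc _ _ _
          · simp
        rw [Finset.sum_congr rfl fun i _ => h1 i]
        simp [Finset.sum_ite_eq]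
      have hS2 : (∑ i, ∑ j, if k = j then c i * d j * a i else 0) = d k * (x : A) := by
        have h2 : ∀ i, (∑ j, if k = j then c i * d j * a i else 0) = c i * d k * a i := by
          intro i; simp [Finset.sum_ite_eq]
        rw [Finset.sum_congr rfl fun i _ => h2 i, ← hx1, Finset.mul_sum]
        exact Finset.sum_congr rfl fun i _ => by ring
      rw [hS1, hS2]
    simp only [SetLike.mem_coe, Submodule.mem_comap]
    rw [key]
    exact Submodule.sum_mem _ fun i _ => Submodule.sum_mem _ fun j _ =>
      Submodule.smul_mem _ _ (koszulGen13 a B₁ hB₁ i j)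
  · -- auxG13 w = x ⊗ y - y ⊗ x
    rw [auxG13_apply]
    have hx' : ∑ i, c i • (⟨a i, ha i⟩ : ↥I) = x :=
      Subtype.ext (by push_cast; exact hc)
    have hy' : ∑ i, d i • (⟨a i, ha i⟩ : ↥I) = y :=
      Subtype.ext (by push_cast; exact hd)
    calc ∑ i, (⟨a i, ha i⟩ : ↥I) ⊗ₜ[A] (c i • y - d i • x)
        = ∑ i, ((c i • (⟨a i, ha i⟩ : ↥I)) ⊗ₜ[A] y - (d i • (⟨a i, ha i⟩ : ↥I)) ⊗ₜ[A] x) := by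
          refine Finset.sum_congr rfl fun i _ => ?_
          rw [TensorProduct.tmul_sub, TensorProduct.tmul_smul, TensorProduct.tmul_smul,
            TensorProduct.smul_tmul', TensorProduct.smul_tmul']
      _ = (∑ i, c i • (⟨a i, ha i⟩ : ↥I)) ⊗ₜ[A] y - (∑ i, d i • (⟨a i, ha i⟩ : ↥I)) ⊗ₜ[A] x := by
          rw [Finset.sum_sub_distrib, TensorProduct.sum_tmul, TensorProduct.sum_tmul]
      _ = x ⊗ₜ[A] y - y ⊗ₜ[A] x := by rw [hx', hy']

lemma ker_step13 (ha : ∀ i, a i ∈ I) (hI : I = Ideal.span (Set.range a))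
    (Z₁ : Submodule A (Fin n → A))
    (hZ₁ : Z₁ = LinearMap.ker (∑ i, (LinearMap.proj i).smulRight (a i) :
      (Fin n → A) →ₗ[A] A))
    (B₁ : Submodule A (Fin n → A))
    (hB₁ : B₁ = Submodule.span A
      {v | ∃ i j : Fin n, i < j ∧ v = Pi.single j (a i) - Pi.single i (a j)})
    (v : Fin n → ↥I) (hvZ : cV13 I v ∈ Z₁) (h0 : auxG13 a I ha v = 0) :
    cV13 I v ∈ B₁ := by
  have hFsurj : Function.Surjective (auxF13 a I ha) := by
    rintro x
    obtain ⟨c, hc⟩ := (Submodule.mem_span_range_iff_exists_fun A).1 (mem_spanRange13 a I hI x)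
    exact ⟨c, Subtype.ext (by rw [auxF13_apply]; simpa [smul_eq_mul] using hc)⟩
  have hker : LinearMap.ker (auxF13 a I ha) = Z₁ := by
    rw [auxF13, LinearMap.ker_codRestrict, hZ₁]
  have hexact : Function.Exact Z₁.subtype (auxF13 a I ha) := by
    rw [LinearMap.exact_iff, hker, Submodule.range_subtype]
  have hex2 := rTensor_exact (↥I) hexact hFsurj
  have hEv : (auxF13 a I ha).rTensor ↥I (auxE13 I v) = auxG13 a I ha v := by
    simp only [auxE13, auxG13, LinearMap.sum_apply, LinearMap.coe_comp,
      Function.comp_apply, LinearMap.proj_apply, TensorProduct.mk_apply, map_sum,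
      LinearMap.rTensor_tmul]
    refine Finset.sum_congr rfl fun i _ => ?_
    congr 1
    refine Subtype.ext ?_
    rw [auxF13_apply]
    simp [Pi.single_apply]
  obtain ⟨t, ht⟩ := (hex2 (auxE13 I v)).1 (by rw [hEv, h0])
  have hHE : auxH13 I (auxE13 I v) = cV13 I v := by
    simp only [auxE13, LinearMap.sum_apply, LinearMap.coe_comp, Function.comp_apply,
      LinearMap.proj_apply, TensorProduct.mk_apply, map_sum]
    have h1 : ∀ i, auxH13 I ((Pi.single i 1 : Fin n → A) ⊗ₜ[A] v i)
        = Pi.single i ((v i : A)) := by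
      intro i
      rw [auxH13_tmul, ← Pi.single_smul', smul_eq_mul, mul_one]
    rw [Finset.sum_congr rfl fun i _ => h1 i]
    exact Finset.univ_sum_single fun i => ((v i : A))
  have hcomp : cV13 I v = (auxH13 I ∘ₗ Z₁.subtype.rTensor ↥I) t := by
    rw [LinearMap.comp_apply, ht, hHE]
  have hrange : LinearMap.range (auxH13 I ∘ₗ Z₁.subtype.rTensor ↥I) ≤ B₁ := by
    rw [LinearMap.range_eq_map, ← TensorProduct.span_tmul_eq_top, Submodule.map_span,
      Submodule.span_le]
    rintro _ ⟨_, ⟨z, y, rfl⟩, rfl⟩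
    simp only [SetLike.mem_coe, LinearMap.comp_apply, LinearMap.rTensor_tmul,
      Submodule.coe_subtype]
    rw [auxH13_tmul]
    exact smul_syz_mem13 a I hI Z₁ hZ₁ B₁ hB₁ z.2 y.2
  rw [hcomp]
  exact hrange ⟨t, rfl⟩

lemma theta_vanish13 (ha : ∀ i, a i ∈ I)
    (B₁ : Submodule A (Fin n → A))
    (hB₁ : B₁ = Submodule.span A
      {v | ∃ i j : Fin n, i < j ∧ v = Pi.single j (a i) - Pi.single i (a j)})
    (hB₁I : ∀ u ∈ B₁, ∀ k, u k ∈ I) :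
    ∀ u, u ∈ B₁ → ∀ w : Fin n → ↥I, cV13 I w = u →
      (symRel I).mkQ (auxG13 a I ha w) = 0 := by
  intro u hu
  rw [hB₁] at hu
  have hB₁I' : ∀ u ∈ Submodule.span A
      {v : Fin n → A | ∃ i j : Fin n, i < j ∧ v = Pi.single j (a i) - Pi.single i (a j)},
      ∀ k, u k ∈ I := by rw [← hB₁]; exact hB₁I
  clear hB₁I
  induction hu using Submodule.span_induction with
  | mem x hx =>
    intro w hw
    obtain ⟨i, j, hij, rfl⟩ := hx
    have hwo : w = Pi.single j (⟨a i, ha i⟩ : ↥I) - Pi.single i ⟨a j, ha j⟩ := by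
      apply cV13_injective I
      rw [hw]
      funext k
      simp only [cV13_apply, Pi.sub_apply, AddSubgroupClass.coe_sub]
      congr 1 <;> · rw [Pi.single_apply, Pi.single_apply]; split <;> rfl
    rw [hwo, map_sub, auxG13_single, auxG13_single, map_sub, Submodule.mkQ_apply,
      Submodule.mkQ_apply, ← Submodule.Quotient.mk_sub, Submodule.Quotient.mk_eq_zero]
    exact Submodule.subset_span ⟨⟨a j, ha j⟩, ⟨a i, ha i⟩, rfl⟩
  | zero =>
    intro w hw
    have : w = 0 := cV13_injective I (by rw [hw, map_zero])
    rw [this, map_zero, map_zero]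
  | add x y hx hy ihx ihy =>
    intro w hw
    set wx : Fin n → ↥I := fun k => ⟨x k, hB₁I' x hx k⟩ with hwx
    set wy : Fin n → ↥I := fun k => ⟨y k, hB₁I' y hy k⟩ with hwy
    have hw' : w = wx + wy := cV13_injective I (by rw [hw, map_add]; rfl)
    rw [hw', map_add, map_add, ihx wx rfl, ihy wy rfl, add_zero]
  | smul c x hx ih =>
    intro w hw
    set wx : Fin n → ↥I := fun k => ⟨x k, hB₁I' x hx k⟩ with hwx
    have hw' : w = c • wx := cV13_injective I (by rw [hw, map_smul]; rfl)
    rw [hw', map_smul, map_smul, ih wx rfl, smul_zero]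

end Aux13

/-- for `I = (a₁,…,aₙ)` in a commutative noetherian ring `A`, with
`Z₁` the syzygies of `a₁,…,aₙ`, `B₁ ⊆ Z₁` the Koszul syzygies and `I·Aⁿ = I^{⊕n}`, there
is an `A`-module isomorphism `(Z₁ ∩ I·Aⁿ)/B₁ ≅ ker(Sym²_A(I) → I²)`; consequently
`B₁ = Z₁ ∩ I·Aⁿ` iff `I` is syzygetic. -/
theorem statement13 {A : Type*} [CommRing A] [IsNoetherianRing A]
    (n : ℕ) (a : Fin n → A) (I : Ideal A) (hI : I = Ideal.span (Set.range a))
    (Z₁ : Submodule A (Fin n → A))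
    (hZ₁ : Z₁ = LinearMap.ker (∑ i, (LinearMap.proj i).smulRight (a i) :
      (Fin n → A) →ₗ[A] A))
    (B₁ : Submodule A (Fin n → A))
    (hB₁ : B₁ = Submodule.span A
      {v | ∃ i j : Fin n, i < j ∧ v = Pi.single j (a i) - Pi.single i (a j)})
    (IAn : Submodule A (Fin n → A))
    (hIAn : IAn = Submodule.pi Set.univ fun _ => (I : Submodule A A)) :
    Nonempty
      ((↥(Z₁ ⊓ IAn) ⧸ Submodule.comap (Z₁ ⊓ IAn).subtype B₁)
        ≃ₗ[A] ↥(LinearMap.ker (sym2Mul I))) ∧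
    (B₁ = Z₁ ⊓ IAn ↔ LinearMap.ker (sym2Mul I) = ⊥) := by
  have ha : ∀ i, a i ∈ I := fun i => hI ▸ Ideal.subset_span ⟨i, rfl⟩
  have hmemIAn : ∀ x : ↥(Z₁ ⊓ IAn), ∀ i, (x : Fin n → A) i ∈ I := by
    intro x i
    have h2 : (x : Fin n → A) ∈ Submodule.pi Set.univ fun _ => (I : Submodule A A) := by
      rw [← hIAn]; exact (Submodule.mem_inf.1 x.2).2
    exact Submodule.mem_pi.1 h2 i (Set.mem_univ i)
  set r : ↥(Z₁ ⊓ IAn) →ₗ[A] (Fin n → ↥I) :=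
    LinearMap.pi fun i => LinearMap.codRestrict I
      ((LinearMap.proj i).comp (Z₁ ⊓ IAn).subtype) fun x => hmemIAn x i with hr
  have hrv : ∀ x : ↥(Z₁ ⊓ IAn), cV13 I (r x) = (x : Fin n → A) := fun x => rfl
  set Φ : ↥(Z₁ ⊓ IAn) →ₗ[A] ((↥I ⊗[A] ↥I) ⧸ symRel I) :=
    (symRel I).mkQ ∘ₗ (auxG13 a I ha) ∘ₗ r with hΦ
  have hΦapply : ∀ x, Φ x = (symRel I).mkQ (auxG13 a I ha (r x)) := fun x => rfl
  have hmem : ∀ x, sym2Mul I (Φ x) = 0 := by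
    intro x
    rw [hΦapply, Submodule.mkQ_apply, sym2Mul, Submodule.liftQ_apply,
      tensorMul_auxG13]
    have hx := (memZ13 a Z₁ hZ₁ _).1 x.2.1
    rw [← hx]
    exact Finset.sum_congr rfl fun i _ => mul_comm _ _
  set Φ' : ↥(Z₁ ⊓ IAn) →ₗ[A] ↥(LinearMap.ker (sym2Mul I)) :=
    Φ.codRestrict (LinearMap.ker (sym2Mul I)) fun x => LinearMap.mem_ker.2 (hmem x)
    with hΦ'
  have hB₁le := B1_le13 a I ha Z₁ hZ₁ B₁ hB₁ IAn hIAn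
  have hB₁I : ∀ u ∈ B₁, ∀ k, u k ∈ I := by
    intro u hu k
    have h2 : u ∈ Submodule.pi Set.univ fun _ => (I : Submodule A A) := by
      rw [← hIAn]; exact (Submodule.mem_inf.1 (hB₁le hu)).2
    exact Submodule.mem_pi.1 h2 k (Set.mem_univ k)
  have hkerΦ : LinearMap.ker Φ' = Submodule.comap (Z₁ ⊓ IAn).subtype B₁ := by
    rw [hΦ', LinearMap.ker_codRestrict]
    ext x
    simp only [LinearMap.mem_ker, Submodule.mem_comap, Submodule.subtype_apply]
    constructor
    · intro hx
      have h1 : auxG13 a I ha (r x) ∈ symRel I := by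
        rw [hΦapply, Submodule.mkQ_apply, Submodule.Quotient.mk_eq_zero] at hx
        exact hx
      obtain ⟨w, hwB, hwG⟩ := symRel_le13 a I ha hI B₁ hB₁ h1
      simp only [SetLike.mem_coe, Submodule.mem_comap] at hwB
      have h2 : cV13 I (r x - w) ∈ B₁ := by
        refine ker_step13 a I ha hI Z₁ hZ₁ B₁ hB₁ _ ?_ ?_
        · rw [map_sub, hrv]
          exact sub_mem x.2.1 (hB₁le hwB).1
        · rw [map_sub, hwG, sub_self]
      have h3 : (x : Fin n → A) = cV13 I (r x - w) + cV13 I w := by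
        rw [map_sub, hrv, sub_add_cancel]
      rw [h3]
      exact add_mem h2 hwB
    · intro hx
      rw [hΦapply]
      exact theta_vanish13 a I ha B₁ hB₁ hB₁I _ hx (r x) (hrv x)
  have hsurj : Function.Surjective Φ' := by
    rintro ⟨q, hq⟩
    obtain ⟨t, rfl⟩ := Submodule.mkQ_surjective (symRel I) q
    obtain ⟨v, rfl⟩ := auxG13_surj a I ha hI t
    rw [LinearMap.mem_ker, Submodule.mkQ_apply, sym2Mul, Submodule.liftQ_apply,
      tensorMul_auxG13] at hq
    have hZ : cV13 I v ∈ Z₁ := by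
      rw [memZ13 a Z₁ hZ₁, ← hq]
      exact Finset.sum_congr rfl fun i _ => mul_comm _ _
    have hIA : cV13 I v ∈ IAn := by
      rw [hIAn, Submodule.mem_pi]
      intro i _
      exact (v i).2
    refine ⟨⟨cV13 I v, hZ, hIA⟩, ?_⟩
    apply Subtype.ext
    have hrr : r (⟨cV13 I v, hZ, hIA⟩ : ↥(Z₁ ⊓ IAn)) = v :=
      funext fun k => Subtype.ext rfl
    show Φ _ = _
    rw [hΦapply, hrr]
  constructor
  · exact ⟨(Submodule.quotEquivOfEq _ _ hkerΦ.symm).trans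
      (Φ'.quotKerEquivOfSurjective hsurj)⟩
  constructor
  · intro hB
    rw [eq_bot_iff]
    rintro q hq
    obtain ⟨x, hx⟩ := hsurj ⟨q, hq⟩
    have hx0 : Φ' x = 0 := by
      have hxk : x ∈ LinearMap.ker Φ' := by
        rw [hkerΦ]
        exact hB ▸ x.2
      exact hxk
    rw [hx0] at hx
    rw [Submodule.mem_bot]
    exact (congrArg Subtype.val hx).symm
  · intro hbot
    refine le_antisymm hB₁le ?_
    intro u hu
    have h2 : Φ' ⟨u, hu⟩ = 0 := by
      apply Subtype.ext
      have := LinearMap.mem_ker.2 (hmem ⟨u, hu⟩)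
      rw [hbot, Submodule.mem_bot] at this
      exact this
    have h3 : (⟨u, hu⟩ : ↥(Z₁ ⊓ IAn)) ∈ LinearMap.ker Φ' := LinearMap.mem_ker.2 h2
    rw [hkerΦ, Submodule.mem_comap] at h3
    exact h3
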